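/- Let R = ℚ[q^{±1}, t^{±1}] and let {m}_i := R/(φ_m(q), q^i t + 1) for m > 1, i ≥ 0. Then {m}_i and {m'}_{i'} are isomorphic as ℚ[t^{±1}]-modules if and only if φ(m) = φ(m') (Euler totient) and m/gcd(m,i) = m'/gcd(m',i'). -/

import Mathlib

open Polynomial

/-- The ring `R = ℚ[q^{±1}, t^{±1}]`, modelled as Laurent polynomials in `q` with
coefficients in `ℚ[t^{±1}]`, so that `R` is naturally an algebra (hence a module) over
`ℚ[t^{±1}]` via the inclusion. -/
noncomputable abbrev LaurentTQ : Type := LaurentPolynomial (LaurentPolynomial ℚ)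

/-- The variable `q` (the outer Laurent variable). -/
noncomputable def qv : LaurentTQ := LaurentPolynomial.T 1

/-- The variable `t` (the coefficient Laurent variable). -/
noncomputable def tv : LaurentTQ := LaurentPolynomial.C (LaurentPolynomial.T 1)

/-- The module `{m}_i = R/(φ_m(q), q^i t + 1)`. -/
noncomputable def qtMod (m i : ℕ) : Type :=
  LaurentTQ ⧸ Ideal.span {(aeval qv (cyclotomic m ℚ) : LaurentTQ), qv ^ i * tv + 1}

noncomputable instance (m i : ℕ) : AddCommGroup (qtMod m i) :=
  inferInstanceAs (AddCommGroup (LaurentTQ ⧸ Ideal.span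
    {(aeval qv (cyclotomic m ℚ) : LaurentTQ), qv ^ i * tv + 1}))

noncomputable instance (m i : ℕ) : Module (LaurentPolynomial ℚ) (qtMod m i) :=
  inferInstanceAs (Module (LaurentPolynomial ℚ) (LaurentTQ ⧸ Ideal.span
    {(aeval qv (cyclotomic m ℚ) : LaurentTQ), qv ^ i * tv + 1}))

/-!
Modulo `φ_m(q)` the variable `q` becomes a primitive `m`-th root of unity `ζ`, so the relation
`q^i t + 1 = 0` eliminates `t = -ζ^{-i}` and `{m}_i` is the field `ℚ(ζ_m)` on which `t` acts
by multiplication with `-ζ^{-i}`. Thus `-t` acts with multiplicative order `d = m / gcd(m, i)`,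
which the annihilator detects, and `φ(m)` is the `ℚ`-dimension. Conversely `ζ_d ↦ ζ^i` makes
`ℚ(ζ_m)` a `ℚ(ζ_d)`-vector space of dimension `φ(m)/φ(d)` in which `t` acts as the scalar
`-ζ_d^{-1}`, so `{m}_i ≅ {d}_1^{φ(m)/φ(d)}`, which depends only on `φ(m)` and `d`.
-/

open LaurentPolynomial

local notation:max "𝕂" m:max => AdjoinRoot (cyclotomic m ℚ)

theorem LaurentPolynomial.ringHom_ext' {R S : Type*} [CommSemiring R] [CommSemiring S]
    {f g : R[T;T⁻¹] →+* S} (hC : f.comp C = g.comp C) (hT : f (T 1) = g (T 1)) : f = g :=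
  IsLocalization.ringHom_ext (Submonoid.powers (X : R[X])) <|
    Polynomial.ringHom_ext (fun a => by simpa using RingHom.congr_fun hC a) (by simpa using hT)

theorem laurentTQ_ringHom_ext {S : Type*} [CommRing S] {f g : LaurentTQ →+* S}
    (hq : f qv = g qv) (ht : f tv = g tv) : f = g :=
  LaurentPolynomial.ringHom_ext' (LaurentPolynomial.ringHom_ext' (Subsingleton.elim _ _) ht) hq

theorem isUnit_qv : IsUnit qv := isUnit_T 1

noncomputable def qtEval {S : Type*} [CommRing S] [Algebra ℚ S] (u v : Sˣ) : LaurentTQ →+* S :=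
  eval₂ (eval₂ (algebraMap ℚ S) v) u

section Eval

variable {S : Type*} [CommRing S] [Algebra ℚ S] (u v : Sˣ)

@[simp] theorem qtEval_qv : qtEval u v qv = u := by simp [qtEval, qv]

@[simp] theorem qtEval_tv : qtEval u v tv = v := by simp [qtEval, tv]

@[simp] theorem qtEval_C (p : LaurentPolynomial ℚ) :
    qtEval u v (C p) = eval₂ (algebraMap ℚ S) v p := by
  simp [qtEval]

end Eval

noncomputable def qtIdeal (f : ℚ[X]) (i : ℕ) : Ideal LaurentTQ :=
  Ideal.span {aeval qv f, qv ^ i * tv + 1}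

theorem smul_quotient_mk (I : Ideal LaurentTQ) (p : LaurentPolynomial ℚ) (y : LaurentTQ) :
    p • Ideal.Quotient.mk I y = Ideal.Quotient.mk I (LaurentPolynomial.C p * y) := by
  rw [LaurentPolynomial.C_eq_algebraMap, ← Algebra.smul_def]
  exact (Submodule.Quotient.mk_smul I p y).symm

section QuotEquiv

variable (f : ℚ[X]) (i : ℕ) (hf : IsUnit (AdjoinRoot.root f))

/-- The value of `t` in `ℚ[X]/(f)` forced by `q ^ i * t + 1 = 0` when `q ↦ X`. -/
noncomputable def tRoot : (AdjoinRoot f)ˣ := -(hf.unit ^ i)⁻¹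

theorem root_pow_mul_tRoot : AdjoinRoot.root f ^ i * (tRoot f i hf : AdjoinRoot f) = -1 := by
  have h := Units.mul_inv (hf.unit ^ i)
  rw [Units.val_pow_eq_pow_val, IsUnit.unit_spec] at h
  rw [tRoot, Units.val_neg, mul_neg, h]

theorem eq_tRoot_iff (x : AdjoinRoot f) :
    x = tRoot f i hf ↔ AdjoinRoot.root f ^ i * x = -1 :=
  ⟨fun h => h ▸ root_pow_mul_tRoot f i hf, fun h =>
    (hf.pow i).mul_left_cancel (h.trans (root_pow_mul_tRoot f i hf).symm)⟩

noncomputable def tEval : LaurentPolynomial ℚ →+* AdjoinRoot f :=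
  eval₂ (AdjoinRoot.of f) (tRoot f i hf)

theorem qtIdeal_le_ker : qtIdeal f i ≤ RingHom.ker (qtEval hf.unit (tRoot f i hf)) := by
  refine Ideal.span_le.2 (Set.insert_subset_iff.2 ⟨?_, Set.singleton_subset_iff.2 ?_⟩)
  · rw [SetLike.mem_coe, RingHom.mem_ker, ← RingHom.toRatAlgHom_apply, ← aeval_algHom_apply,
      RingHom.toRatAlgHom_apply, qtEval_qv, IsUnit.unit_spec, AdjoinRoot.aeval_eq,
      AdjoinRoot.mk_self]
  · rw [SetLike.mem_coe, RingHom.mem_ker, map_add, map_mul, map_pow, map_one, qtEval_qv,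
      qtEval_tv, IsUnit.unit_spec, root_pow_mul_tRoot, neg_add_cancel]

theorem eval₂_mk_qv_eq_zero :
    f.eval₂ (algebraMap ℚ (LaurentTQ ⧸ qtIdeal f i)) (Ideal.Quotient.mk _ qv) = 0 := by
  rw [← aeval_def, ← Ideal.Quotient.mkₐ_eq_mk ℚ, aeval_algHom_apply, Ideal.Quotient.mkₐ_eq_mk,
    Ideal.Quotient.eq_zero_iff_mem]
  exact Ideal.subset_span (Set.mem_insert _ _)

theorem mk_qv_pow_mul_mk_tv :
    Ideal.Quotient.mk (qtIdeal f i) qv ^ i * Ideal.Quotient.mk (qtIdeal f i) tv = -1 := by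
  rw [← map_pow, ← map_mul, eq_neg_iff_add_eq_zero, ← map_one (Ideal.Quotient.mk _), ← map_add,
    Ideal.Quotient.eq_zero_iff_mem]
  exact Ideal.subset_span (Set.mem_insert_of_mem _ rfl)

noncomputable def qtQuotInv : AdjoinRoot f →+* LaurentTQ ⧸ qtIdeal f i :=
  AdjoinRoot.lift (algebraMap ℚ _) (Ideal.Quotient.mk (qtIdeal f i) qv) (eval₂_mk_qv_eq_zero f i)

@[simp] theorem qtQuotInv_root : qtQuotInv f i (AdjoinRoot.root f) = Ideal.Quotient.mk _ qv :=
  AdjoinRoot.lift_root _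

theorem qtQuotInv_tRoot : qtQuotInv f i (tRoot f i hf) = Ideal.Quotient.mk _ tv := by
  refine ((isUnit_qv.map (Ideal.Quotient.mk (qtIdeal f i))).pow i).mul_left_cancel ?_
  rw [mk_qv_pow_mul_mk_tv, ← qtQuotInv_root, ← map_pow, ← map_mul, root_pow_mul_tRoot, map_neg,
    map_one]

noncomputable def qtQuotEquiv : (LaurentTQ ⧸ qtIdeal f i) ≃+* AdjoinRoot f :=
  RingEquiv.ofRingHom
    (Ideal.Quotient.lift _ (qtEval hf.unit (tRoot f i hf)) fun _ h =>
      RingHom.mem_ker.1 (qtIdeal_le_ker f i hf h))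
    (qtQuotInv f i)
    (AdjoinRoot.ringHom_ext (Subsingleton.elim _ _) (by simp))
    (Ideal.Quotient.ringHom_ext <| laurentTQ_ringHom_ext (S := LaurentTQ ⧸ qtIdeal f i)
      (by simp) (by simp [qtQuotInv_tRoot]))

@[simp] theorem qtQuotEquiv_mk (y : LaurentTQ) :
    qtQuotEquiv f i hf (Ideal.Quotient.mk _ y) = qtEval hf.unit (tRoot f i hf) y := rfl

theorem qtQuotEquiv_smul (p : LaurentPolynomial ℚ) (x : LaurentTQ ⧸ qtIdeal f i) :
    qtQuotEquiv f i hf (p • x) = tEval f i hf p * qtQuotEquiv f i hf x := by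
  obtain ⟨y, rfl⟩ := Ideal.Quotient.mk_surjective x
  rw [smul_quotient_mk, qtQuotEquiv_mk, qtQuotEquiv_mk, map_mul, qtEval_C]
  rfl

theorem mem_annihilator_qtQuot_iff (p : LaurentPolynomial ℚ) :
    p ∈ Module.annihilator (LaurentPolynomial ℚ) (LaurentTQ ⧸ qtIdeal f i) ↔
      tEval f i hf p = 0 := by
  refine ⟨fun h => ?_, fun h => Module.mem_annihilator.2 fun x => ?_⟩
  · have := congrArg (qtQuotEquiv f i hf)
      (Module.mem_annihilator.1 h ((qtQuotEquiv f i hf).symm 1))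
    rwa [qtQuotEquiv_smul, RingEquiv.apply_symm_apply, mul_one, map_zero] at this
  · apply (qtQuotEquiv f i hf).injective
    rw [qtQuotEquiv_smul, h, zero_mul, map_zero]

end QuotEquiv

theorem IsPrimitiveRoot.pow_div_gcd {M : Type*} [CommMonoid M] {ζ : M} {m : ℕ}
    (hζ : IsPrimitiveRoot ζ m) (hm : m ≠ 0) (i : ℕ) : IsPrimitiveRoot (ζ ^ i) (m / m.gcd i) := by
  rw [hζ.eq_orderOf, ← (hζ.isOfFinOrder hm).orderOf_pow]
  exact IsPrimitiveRoot.orderOf _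

theorem finrank_adjoinRoot_cyclotomic (m : ℕ) : Module.finrank ℚ 𝕂 m = m.totient := by
  rw [(AdjoinRoot.powerBasis (cyclotomic_ne_zero m ℚ)).finrank, AdjoinRoot.powerBasis_dim,
    natDegree_cyclotomic]

instance (m : ℕ) [NeZero m] : Fact (Irreducible (cyclotomic m ℚ)) :=
  ⟨cyclotomic.irreducible_rat (NeZero.pos m)⟩

section Cyclotomic

variable (m : ℕ) [NeZero m] (i : ℕ)

instance : NeZero (m / m.gcd i) :=
  ⟨(Nat.div_pos (Nat.gcd_le_left i (NeZero.pos m)) (Nat.gcd_pos_of_pos_left i (NeZero.pos m))).ne'⟩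

theorem isPrimitiveRoot_root_cyclotomic : IsPrimitiveRoot (AdjoinRoot.root (cyclotomic m ℚ)) m :=
  isRoot_cyclotomic_iff.1 (by simpa using AdjoinRoot.isRoot_root (cyclotomic m ℚ))

theorem isUnit_root_cyclotomic : IsUnit (AdjoinRoot.root (cyclotomic m ℚ)) :=
  (isPrimitiveRoot_root_cyclotomic m).isUnit (NeZero.ne m)

noncomputable abbrev cycEquiv : (LaurentTQ ⧸ qtIdeal (cyclotomic m ℚ) i) ≃+* 𝕂 m :=
  qtQuotEquiv _ i (isUnit_root_cyclotomic m)

theorem finrank_qtQuot_cyclotomic :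
    Module.finrank ℚ (LaurentTQ ⧸ qtIdeal (cyclotomic m ℚ) i) = m.totient := by
  rw [(cycEquiv m i).toAddEquiv.toLinearEquiv (map_rat_smul (cycEquiv m i)) |>.finrank_eq,
    finrank_adjoinRoot_cyclotomic]

theorem isPrimitiveRoot_neg_tRoot :
    IsPrimitiveRoot (-tRoot _ i (isUnit_root_cyclotomic m)) (m / m.gcd i) := by
  rw [tRoot, neg_neg]
  exact (((isPrimitiveRoot_root_cyclotomic m).isUnit_unit (NeZero.ne m)).pow_div_gcd
    (NeZero.ne m) i).inv

theorem neg_T_pow_sub_one_mem_annihilator_iff (j : ℕ) :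
    (-T 1) ^ j - 1 ∈
        Module.annihilator (LaurentPolynomial ℚ) (LaurentTQ ⧸ qtIdeal (cyclotomic m ℚ) i) ↔
      m / m.gcd i ∣ j := by
  rw [mem_annihilator_qtQuot_iff _ _ (isUnit_root_cyclotomic m),
    ← (isPrimitiveRoot_neg_tRoot m i).pow_eq_one_iff_dvd]
  simp only [tEval, map_sub, map_pow, map_neg, eval₂_T, zpow_one, map_one, sub_eq_zero,
    ← Units.val_neg, ← Units.val_pow_eq_pow_val, Units.val_eq_one]

noncomputable def cycEmb : 𝕂 (m / m.gcd i) →+* 𝕂 m :=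
  AdjoinRoot.lift (algebraMap ℚ _) (AdjoinRoot.root (cyclotomic m ℚ) ^ i) <| by
    rw [eval₂_eq_eval_map, map_cyclotomic]
    exact ((isPrimitiveRoot_root_cyclotomic m).pow_div_gcd (NeZero.ne m) i).isRoot_cyclotomic
      (NeZero.pos _)

theorem cycEmb_root : cycEmb m i (AdjoinRoot.root _) = AdjoinRoot.root (cyclotomic m ℚ) ^ i :=
  AdjoinRoot.lift_root _

theorem cycEmb_tRoot :
    cycEmb m i (tRoot _ 1 (isUnit_root_cyclotomic (m / m.gcd i))) =
      tRoot _ i (isUnit_root_cyclotomic m) := by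
  have h := root_pow_mul_tRoot _ 1 (isUnit_root_cyclotomic (m / m.gcd i))
  rw [pow_one] at h
  rw [eq_tRoot_iff, ← cycEmb_root, ← map_mul, h, map_neg, map_one]

theorem cycEmb_comp_tEval :
    (cycEmb m i).comp (tEval _ 1 (isUnit_root_cyclotomic _)) =
      tEval _ i (isUnit_root_cyclotomic m) :=
  LaurentPolynomial.ringHom_ext' (Subsingleton.elim _ _) (by simp [tEval, cycEmb_tRoot])

theorem nonempty_qtQuot_linearEquiv_pi :
    Nonempty ((LaurentTQ ⧸ qtIdeal (cyclotomic m ℚ) i) ≃ₗ[LaurentPolynomial ℚ]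
      (Fin (m.totient / (m / m.gcd i).totient) →
        LaurentTQ ⧸ qtIdeal (cyclotomic (m / m.gcd i) ℚ) 1)) := by
  let := (cycEmb m i).toAlgebra
  have : IsScalarTower ℚ 𝕂 (m / m.gcd i) 𝕂 m := .of_algebraMap_eq' (Subsingleton.elim _ _)
  have := Module.Finite.of_restrictScalars_finite ℚ 𝕂 (m / m.gcd i) 𝕂 m
  have hr : Module.finrank 𝕂 (m / m.gcd i) 𝕂 m = m.totient / (m / m.gcd i).totient := by
    have := Module.finrank_mul_finrank ℚ 𝕂 (m / m.gcd i) 𝕂 m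
    rw [finrank_adjoinRoot_cyclotomic, finrank_adjoinRoot_cyclotomic] at this
    rw [← this, Nat.mul_div_cancel_left _ (Nat.totient_pos.2 (NeZero.pos _))]
  let B := (Module.finBasisOfFinrankEq _ _ hr).equivFun
  refine ⟨AddEquiv.toLinearEquiv ((cycEquiv m i).toAddEquiv.trans ((LinearEquiv.toAddEquiv B).trans
    (AddEquiv.piCongrRight fun _ => (cycEquiv _ 1).symm.toAddEquiv))) fun p x => funext fun k => ?_⟩
  apply (cycEquiv _ 1).injective
  simp only [AddEquiv.trans_apply, AddEquiv.piCongrRight_apply, Pi.smul_apply,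
    RingEquiv.toAddEquiv_eq_coe, RingEquiv.coe_toAddEquiv, LinearEquiv.coe_toAddEquiv]
  rw [RingEquiv.apply_symm_apply, qtQuotEquiv_smul, qtQuotEquiv_smul, RingEquiv.apply_symm_apply,
    ← cycEmb_comp_tEval, RingHom.comp_apply, ← RingHom.algebraMap_toAlgebra (cycEmb m i),
    ← Algebra.smul_def]
  exact congrFun (B.map_smul _ _) k

end Cyclotomic

/-- For `m, m' > 1`, the modules `{m}_i` and `{m'}_{i'}` are isomorphic as
`ℚ[t^{±1}]`-modules if and only if `φ(m) = φ(m')` (Euler totient) and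
`m / gcd(m,i) = m' / gcd(m',i')`. -/
theorem stmt_15 (m m' i i' : ℕ) (hm : 1 < m) (hm' : 1 < m') :
    Nonempty (qtMod m i ≃ₗ[LaurentPolynomial ℚ] qtMod m' i') ↔
      (Nat.totient m = Nat.totient m' ∧ m / Nat.gcd m i = m' / Nat.gcd m' i') := by
  have : NeZero m := ⟨by omega⟩
  have : NeZero m' := ⟨by omega⟩
  change Nonempty ((LaurentTQ ⧸ qtIdeal (cyclotomic m ℚ) i) ≃ₗ[LaurentPolynomial ℚ]
    (LaurentTQ ⧸ qtIdeal (cyclotomic m' ℚ) i')) ↔ _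
  constructor
  · rintro ⟨e⟩
    have hdvd (j : ℕ) : m / m.gcd i ∣ j ↔ m' / m'.gcd i' ∣ j := by
      rw [← neg_T_pow_sub_one_mem_annihilator_iff, e.annihilator_eq,
        neg_T_pow_sub_one_mem_annihilator_iff]
    refine ⟨?_, Nat.dvd_antisymm ((hdvd _).2 dvd_rfl) ((hdvd _).1 dvd_rfl)⟩
    rw [← finrank_qtQuot_cyclotomic m i, ← finrank_qtQuot_cyclotomic m' i']
    exact (e.toAddEquiv.toLinearEquiv (map_rat_smul e)).finrank_eq
  · rintro ⟨htot, hd⟩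
    obtain ⟨e⟩ := nonempty_qtQuot_linearEquiv_pi m i
    obtain ⟨e'⟩ := nonempty_qtQuot_linearEquiv_pi m' i'
    rw [htot, hd] at e
    exact ⟨e.trans e'.symm⟩
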